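/- Let σ, β > 0 and let ζ be a centered real Gaussian random variable with variance σ/β. Then for every 2π-periodic function F: ℝ → ℝ with F̂(0) = 0 and ‖F‖ < ∞, the function G(φ) := 𝔼[F(φ+ζ)] is 2π-periodic with Ĝ(0) = 0 and satisfies ‖G‖ ≤ e^{−σ/(2β)} ‖F‖. -/

import Mathlib

open MeasureTheory Real

/-- Fourier coefficient `F̂(q) = (2π)⁻¹ ∫_0^{2π} F(φ) e^{iqφ} dφ` of a `2π`-periodic `F`. -/
noncomputable def fCoef (F : ℝ → ℝ) (q : ℤ) : ℂ :=
  (2 * Real.pi : ℂ)⁻¹ *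
    ∫ φ in (0 : ℝ)..(2 * Real.pi), (F φ : ℂ) * Complex.exp ((q : ℂ) * (φ : ℂ) * Complex.I)

/-- The norm `‖F‖ = Σ_{q∈ℤ} (1+|q|)² |F̂(q)|`. -/
noncomputable def pnorm (F : ℝ → ℝ) : ℝ :=
  ∑' q : ℤ, (1 + |(q : ℝ)|) ^ 2 * ‖fCoef F q‖

/-- Summability of the weighted Fourier coefficients of `F`, i.e. `‖F‖ < ∞`. -/
def pSummable (F : ℝ → ℝ) : Prop :=
  Summable fun q : ℤ => (1 + |(q : ℝ)|) ^ 2 * ‖fCoef F q‖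

/-- `F` with its zero Fourier mode subtracted: `F - F̂(0)`. -/
noncomputable def centered (F : ℝ → ℝ) : ℝ → ℝ := fun φ => F φ - (fCoef F 0).re

/-- Gaussian smoothing: `G(φ) = 𝔼[F(φ+ζ)]` with `ζ` centered Gaussian of variance `v`. -/
noncomputable def gaussSmooth (v : ℝ) (F : ℝ → ℝ) (φ : ℝ) : ℝ :=
  ∫ z : ℝ, F (φ + z) ∂(ProbabilityTheory.gaussianReal 0 (Real.toNNReal v))


/-!
Averaging the translates `F (· + z)` against a finite measure `μ` multiplies the `q`-th Fourier
coefficient by `charFun μ (-q)`: by Fubini, each translate contributes `e^{-iqz} F̂(q)`, since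
the integral of a `2π`-periodic function over a period does not depend on where the period
starts. For the centered Gaussian of variance `v` the multiplier has modulus `e^{-vq²/2}`, which
is at most `e^{-v/2}` off the mode `q = 0`, and that mode vanishes. So the weighted sum
defining `‖·‖` contracts termwise by `e^{-v/2}`.
-/

open Function ProbabilityTheory
open scoped Complex

lemma Function.Periodic.integral_comp_add {E : Type*} [NormedAddCommGroup E] [NormedSpace ℝ E]
    {F : ℝ → E} {c : ℝ} (hper : Periodic F c) (μ : Measure ℝ) :
    Periodic (fun φ => ∫ z, F (φ + z) ∂μ) c := fun φ => by
  simp only [add_right_comm φ c, hper _]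

lemma periodic_mul_cexp_intCast_mul_I {F : ℝ → ℝ} (hper : Periodic F (2 * π)) (q : ℤ) :
    Periodic (fun φ => (F φ : ℂ) * cexp (q * φ * Complex.I)) (2 * π) := by
  refine fun φ => congrArg₂ (· * ·) (congrArg _ (hper φ)) ?_
  rw [show (q : ℂ) * ((φ + 2 * π : ℝ) : ℂ) * Complex.I
      = q * φ * Complex.I + q * (2 * π * Complex.I) by push_cast; ring,
    Complex.exp_add, Complex.exp_int_mul_two_pi_mul_I, mul_one]

lemma fCoef_comp_add_right {F : ℝ → ℝ} (hper : Periodic F (2 * π)) (z : ℝ) (q : ℤ) :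
    fCoef (fun φ => F (φ + z)) q = cexp (-(q * z * Complex.I)) * fCoef F q := by
  have hshift : ∀ φ : ℝ, (F (φ + z) : ℂ) * cexp (q * φ * Complex.I)
      = cexp (-(q * z * Complex.I)) *
          ((F (φ + z) : ℂ) * cexp (q * ((φ + z : ℝ) : ℂ) * Complex.I)) := by
    intro φ
    rw [mul_left_comm, ← Complex.exp_add]
    push_cast
    ring_nf
  simp only [fCoef, hshift, intervalIntegral.integral_const_mul,
    intervalIntegral.integral_comp_add_right (fun ψ => (F ψ : ℂ) * cexp (q * ψ * Complex.I)),
    zero_add, add_comm (2 * π) z,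
    (periodic_mul_cexp_intCast_mul_I hper q).intervalIntegral_add_eq z 0]
  ring

lemma fCoef_integral_comp_add {F : ℝ → ℝ} (hFc : Continuous F) (hper : Periodic F (2 * π))
    (μ : Measure ℝ) [IsFiniteMeasure μ] (q : ℤ) :
    fCoef (fun φ => ∫ z, F (φ + z) ∂μ) q = charFun μ (-q) * fCoef F q := by
  obtain ⟨M, hM⟩ := (hper.isBounded_of_continuous (by positivity) hFc).exists_norm_le
  have hint : Integrable (uncurry fun φ z => (F (φ + z) : ℂ) * cexp (q * φ * Complex.I))
      ((volume.restrict (Set.uIoc 0 (2 * π))).prod μ) := by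
    have : IsFiniteMeasure (volume.restrict (Set.uIoc 0 (2 * π))) := by
      rw [Set.uIoc]; infer_instance
    refine (integrable_const M).mono' (by fun_prop) (ae_of_all _ fun p => ?_)
    have hunit : ‖cexp (q * p.1 * Complex.I)‖ = 1 := by
      exact_mod_cast Complex.norm_exp_ofReal_mul_I (q * p.1)
    simpa only [uncurry, norm_mul, hunit, mul_one, Complex.norm_real] using hM _ ⟨_, rfl⟩
  calc fCoef (fun φ => ∫ z, F (φ + z) ∂μ) q
      = (2 * π : ℂ)⁻¹ * ∫ z, (∫ φ in (0 : ℝ)..2 * π,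
          (F (φ + z) : ℂ) * cexp (q * φ * Complex.I)) ∂μ := by
        rw [fCoef, ← intervalIntegral_integral_swap hint]
        simp_rw [← integral_complex_ofReal, ← integral_mul_const]
    _ = ∫ z, fCoef (fun φ => F (φ + z)) q ∂μ := by simp only [fCoef, integral_const_mul]
    _ = charFun μ (-q) * fCoef F q := by
        simp_rw [fCoef_comp_add_right hper, integral_mul_const, charFun_apply_real]
        congr 1
        refine integral_congr_ae (ae_of_all _ fun z => ?_)
        push_cast
        ring_nf

lemma norm_charFun_centered_gaussianReal (v : NNReal) (t : ℝ) :
    ‖charFun (gaussianReal 0 v) t‖ = rexp (-(v * t ^ 2 / 2)) := by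
  rw [charFun_gaussianReal, ← Complex.norm_exp_ofReal]
  push_cast
  ring_nf

lemma norm_charFun_gaussianReal_le_of_one_le_sq (v : ℝ) {t : ℝ} (ht : 1 ≤ t ^ 2) :
    ‖charFun (gaussianReal 0 v.toNNReal) t‖ ≤ rexp (-v / 2) := by
  rw [norm_charFun_centered_gaussianReal, exp_le_exp]
  nlinarith [Real.le_coe_toNNReal v, v.toNNReal.coe_nonneg]

lemma pnorm_le_mul_of_norm_fCoef_le {F G : ℝ → ℝ} {c : ℝ} (hF : pSummable F)
    (h : ∀ q, ‖fCoef G q‖ ≤ c * ‖fCoef F q‖) : pnorm G ≤ c * pnorm F := by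
  have hle : ∀ q : ℤ, (1 + |(q : ℝ)|) ^ 2 * ‖fCoef G q‖
      ≤ c * ((1 + |(q : ℝ)|) ^ 2 * ‖fCoef F q‖) := fun q => by
    rw [mul_left_comm]
    exact mul_le_mul_of_nonneg_left (h q) (by positivity)
  have hcF := hF.mul_left c
  rw [pnorm, pnorm, ← tsum_mul_left]
  exact (Summable.of_nonneg_of_le (fun q => by positivity) hle hcF).tsum_le_tsum hle hcF

lemma fCoef_gaussSmooth {F : ℝ → ℝ} (v : ℝ) (hFc : Continuous F) (hper : Periodic F (2 * π))
    (q : ℤ) :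
    fCoef (gaussSmooth v F) q = charFun (gaussianReal 0 v.toNNReal) (-q) * fCoef F q :=
  fCoef_integral_comp_add hFc hper _ q

lemma norm_fCoef_gaussSmooth_le {F : ℝ → ℝ} (v : ℝ) (hFc : Continuous F)
    (hper : Periodic F (2 * π)) (h0 : fCoef F 0 = 0) (q : ℤ) :
    ‖fCoef (gaussSmooth v F) q‖ ≤ rexp (-v / 2) * ‖fCoef F q‖ := by
  rcases eq_or_ne q 0 with rfl | hq
  · simp [fCoef_gaussSmooth v hFc hper, h0]
  rw [fCoef_gaussSmooth v hFc hper, norm_mul]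
  gcongr
  apply norm_charFun_gaussianReal_le_of_one_le_sq
  have : (1 : ℤ) ≤ q ^ 2 := by nlinarith [Int.one_le_abs hq, sq_abs q]
  rw [neg_sq]
  exact_mod_cast this

theorem stmt18_general (σv β : ℝ)
    (F : ℝ → ℝ) (hFc : Continuous F) (hper : ∀ φ, F (φ + 2 * Real.pi) = F φ)
    (h0 : fCoef F 0 = 0) (hsum : pSummable F) :
    (∀ φ, gaussSmooth (σv / β) F (φ + 2 * Real.pi) = gaussSmooth (σv / β) F φ) ∧
    fCoef (gaussSmooth (σv / β) F) 0 = 0 ∧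
    pnorm (gaussSmooth (σv / β) F) ≤ Real.exp (- σv / (2 * β)) * pnorm F := by
  refine ⟨Periodic.integral_comp_add hper _, ?_, ?_⟩
  · rw [fCoef_gaussSmooth _ hFc hper, h0, mul_zero]
  · rw [show -σv / (2 * β) = -(σv / β) / 2 by ring]
    exact pnorm_le_mul_of_norm_fCoef_le hsum (norm_fCoef_gaussSmooth_le _ hFc hper h0)

theorem stmt18 (σv β : ℝ) (hσ : 0 < σv) (hβ : 0 < β)
    (F : ℝ → ℝ) (hFc : Continuous F) (hper : ∀ φ, F (φ + 2 * Real.pi) = F φ)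
    (h0 : fCoef F 0 = 0) (hsum : pSummable F) :
    (∀ φ, gaussSmooth (σv / β) F (φ + 2 * Real.pi) = gaussSmooth (σv / β) F φ) ∧
    fCoef (gaussSmooth (σv / β) F) 0 = 0 ∧
    pnorm (gaussSmooth (σv / β) F) ≤ Real.exp (- σv / (2 * β)) * pnorm F :=
  stmt18_general σv β F hFc hper h0 hsum
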